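/- There exists a two-track, normal form, reversible Turing machine UtoB with alphabet {#, 1} × {#, 0, 1} with the following properties: on input 1^n;# (the number n written in unary as a string of n 1's on the first track, second track blank), UtoB behaves properly and halts with output 1^n;n (first track unchanged, and n written in little-endian binary on the second track); furthermore UtoB runs for O(n² log n) steps and uses n + 1 tape cells. -/

import Mathlib

open scoped Classical

noncomputable section

/-- Head movement directions of a generalised Turing machine: Left, Right, or None. -/
inductive Dir3 : Type
  | L
  | R
  | N
deriving DecidableEq

instance : Fintype Dir3 :=
  ⟨{Dir3.L, Dir3.R, Dir3.N}, fun x => by cases x <;> decide⟩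

/-- Displacement of the head. -/
def Dir3.move : Dir3 → ℤ
  | .L => -1
  | .R => 1
  | .N => 0

/-- A generalised deterministic Turing machine over tape alphabet `Γ` (with blank
symbol `blank`) and state set `Q`, with initial state `q0`, final state `qf`, and
total transition function `δ : Q × Γ → Γ × Q × {L, R, N}`. -/
structure GTM (Γ Q : Type) where
  blank : Γ
  q0 : Q
  qf : Q
  δ : Q → Γ → Γ × Q × Dir3

/-- A configuration: internal state, head position, and tape contents. -/
structure GCfg (Γ Q : Type) where
  state : Q
  head : ℤ
  tape : ℤ → Γ

/-- The global step function of a generalised TM. -/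
def GTM.step {Γ Q : Type} (M : GTM Γ Q) (c : GCfg Γ Q) : GCfg Γ Q :=
  let t := M.δ c.state (c.tape c.head)
  ⟨t.2.1, c.head + t.2.2.move, Function.update c.tape c.head t.1⟩

/-- A TM is reversible if every configuration has at most one predecessor,
i.e. the global step function is injective. -/
def GTM.Reversible {Γ Q : Type} (M : GTM Γ Q) : Prop :=
  Function.Injective M.step

/-- Normal form: `δ(q_f, σ) = (σ, q₀, N)` for every `σ`. -/
def GTM.NormalForm {Γ Q : Type} (M : GTM Γ Q) : Prop :=
  ∀ σ : Γ, M.δ M.qf σ = (σ, M.q0, Dir3.N)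

/-- The configuration after `t` steps, started in state `q0` with head in the starting
cell `0` on initial tape `tape0`. -/
def GTM.run {Γ Q : Type} (M : GTM Γ Q) (tape0 : ℤ → Γ) (t : ℕ) : GCfg Γ Q :=
  M.step^[t] ⟨M.q0, 0, tape0⟩

/-- `M`, started on `tape0`, behaves properly and halts at time exactly `t` with final
tape `tapeF`: at time `t` it is in the final state for the first time, with the head
back in the starting cell and tape contents `tapeF`, and the head never moved to the
left of the starting cell. -/
def GTM.ProperRun {Γ Q : Type} (M : GTM Γ Q) (tape0 : ℤ → Γ) (t : ℕ)
    (tapeF : ℤ → Γ) : Prop :=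
  (M.run tape0 t).state = M.qf ∧
  (M.run tape0 t).head = 0 ∧
  (M.run tape0 t).tape = tapeF ∧
  (∀ t' < t, (M.run tape0 t').state ≠ M.qf) ∧
  (∀ t' ≤ t, 0 ≤ (M.run tape0 t').head)

/-- `M` uses at most `s` tape cells on this run: the head stays within `[0, s)`. -/
def GTM.SpaceBound {Γ Q : Type} (M : GTM Γ Q) (tape0 : ℤ → Γ) (t : ℕ) (s : ℕ) : Prop :=
  ∀ t' ≤ t, (M.run tape0 t').head < (s : ℤ)

/-- The tape holding the little-endian binary expansion of `n` (no leading zeros,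
zero represented by the empty string), over the alphabet `{#, 0, 1}` modelled as
`Option Bool` with `none = #`. -/
def binTape (n : ℕ) : ℤ → Option Bool := fun i =>
  if 0 ≤ i ∧ i < ((Nat.digits 2 n).length : ℤ)
  then some ((Nat.digits 2 n).getD i.toNat 0 == 1)
  else none

/-- The number of binary digits `|n|` of `n`. -/
def binLen (n : ℕ) : ℕ := (Nat.digits 2 n).length

/-- The unary tape holding `n` written as a string of `n` 1's (alphabet `{#, 1}`
modelled as `Option Unit`, with `none = #`). -/
def unaryTape (n : ℕ) : ℤ → Option Unit := fun i =>
  if 0 ≤ i ∧ i < (n : ℤ) then some () else none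

/-! The machine counts from `2` up to `n` on the second track, using the first track to know
when to stop. The mark of cell `0` is lifted and serves as a beacon; before round `j` the
counter holds `j`, padded with zeros to `j` cells. Round `j` lifts the mark of cell `j`, walks
back to the beacon, adds one (the carry sweeps right and the head walks back), returns to the
hole and restores its mark. The carry of `j + 1` stops below cell `j`, so a round takes at most
`4 j` steps and counting takes `O(n²)` steps inside the `n + 1` cells `[0, n]`. When the
examined cell is blank the counter holds `n`: the padding zeros are erased down to the most
significant bit, the head walks to the end and back, and the beacon gets its mark again.

Every transition of the machine moves the head in a direction determined by the state it
enters, and the written symbol together with the new state determine the old state and the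
symbol read; this makes the step map injective. -/

namespace GTM

variable {Γ Q : Type} (M : GTM Γ Q)

theorem step_mk (q : Q) (p : ℤ) (t : ℤ → Γ) :
    M.step ⟨q, p, t⟩ =
      ⟨(M.δ q (t p)).2.1, p + (M.δ q (t p)).2.2.move, Function.update t p (M.δ q (t p)).1⟩ :=
  rfl

theorem reversible_of_injective (dir : Q → Dir3)
    (hdir : ∀ q σ, (M.δ q σ).2.2 = dir (M.δ q σ).2.1)
    (hinj : Function.Injective fun p : Q × Γ => ((M.δ p.1 p.2).1, (M.δ p.1 p.2).2.1)) :
    M.Reversible := by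
  rintro ⟨q₁, p₁, t₁⟩ ⟨q₂, p₂, t₂⟩ h
  simp only [step_mk, GCfg.mk.injEq] at h
  obtain ⟨hq, hp, ht⟩ := h
  have hp₁₂ : p₁ = p₂ := by rw [hdir, hdir, hq] at hp; omega
  subst hp₁₂
  have hwrite := congrFun ht p₁
  simp only [Function.update_self] at hwrite
  obtain ⟨rfl, hσ⟩ := Prod.mk.inj (hinj (Prod.ext hwrite hq))
  have ht₁₂ : t₁ = t₂ := by
    funext i
    rcases eq_or_ne i p₁ with rfl | hi
    · exact hσ
    · simpa [Function.update_of_ne hi] using congrFun ht i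
  rw [ht₁₂]

def ReachesIn (n k : ℕ) (c c' : GCfg Γ Q) : Prop :=
  M.step^[k] c = c' ∧
    ∀ i < k, (M.step^[i] c).state ≠ M.qf ∧ 0 ≤ (M.step^[i] c).head ∧
      (M.step^[i] c).head ≤ n

variable {M} {n : ℕ}

theorem ReachesIn.refl (c : GCfg Γ Q) : M.ReachesIn n 0 c c :=
  ⟨rfl, fun _ h => absurd h (Nat.not_lt_zero _)⟩

theorem ReachesIn.trans {k k' : ℕ} {c c' c'' : GCfg Γ Q} (h : M.ReachesIn n k c c')
    (h' : M.ReachesIn n k' c' c'') : M.ReachesIn n (k + k') c c'' := by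
  refine ⟨by rw [add_comm, Function.iterate_add_apply, h.1, h'.1], fun i hi => ?_⟩
  rcases lt_or_ge i k with hik | hik
  · exact h.2 i hik
  · obtain ⟨i, rfl⟩ := Nat.exists_eq_add_of_le hik
    rw [add_comm, Function.iterate_add_apply, h.1]
    exact h'.2 i (by omega)

theorem ReachesIn.congr_steps {k k' : ℕ} {c c' : GCfg Γ Q} (h : M.ReachesIn n k c c')
    (hk : k = k') : M.ReachesIn n k' c c' :=
  hk ▸ h

theorem reachesIn_one {q q' : Q} {p p' : ℤ} {t t' : ℤ → Γ} {σ w : Γ} {d : Dir3}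
    (hread : t p = σ) (hδ : M.δ q σ = (w, q', d)) (hq : q ≠ M.qf) (hp₀ : 0 ≤ p)
    (hpn : p ≤ n) (hp' : p + d.move = p') (ht' : Function.update t p w = t') :
    M.ReachesIn n 1 ⟨q, p, t⟩ ⟨q', p', t'⟩ := by
  refine ⟨?_, fun i hi => ?_⟩
  · rw [Function.iterate_one, step_mk, hread, hδ, hp', ht']
  · obtain rfl : i = 0 := by omega
    exact ⟨hq, hp₀, hpn⟩

theorem ReachesIn.chain (f : ℕ → GCfg Γ Q) {a b : ℕ} (m : ℕ) (hm : a + m = b)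
    (h : ∀ k, a ≤ k → k < b → M.ReachesIn n 1 (f k) (f (k + 1))) :
    M.ReachesIn n m (f a) (f b) := by
  subst hm
  induction m with
  | zero => exact .refl _
  | succ m ih =>
    exact (ih fun k hk _ => h k hk (by omega)).trans (h (a + m) (by omega) (by omega))

theorem ReachesIn.chain_down (f : ℕ → GCfg Γ Q) {a b : ℕ} (m : ℕ) (hm : a + m = b)
    (h : ∀ k, a ≤ k → k < b → M.ReachesIn n 1 (f (k + 1)) (f k)) :
    M.ReachesIn n m (f b) (f a) := by
  subst hm
  induction m with
  | zero => exact .refl _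
  | succ m ih =>
    exact ((h (a + m) (by omega) (by omega)).trans
      (ih fun k hk _ => h k hk (by omega))).congr_steps (by omega)

theorem reachesIn_walk_right {q : Q} (hq : q ≠ M.qf) {t : ℤ → Γ} {a b : ℕ} (m : ℕ)
    (hm : a + m = b) (hb : b ≤ n)
    (hwalk : ∀ i : ℕ, a ≤ i → i < b → M.δ q (t i) = (t i, q, .R)) :
    M.ReachesIn n m ⟨q, a, t⟩ ⟨q, b, t⟩ :=
  ReachesIn.chain (fun k => ⟨q, k, t⟩) m hm fun k hak hkb =>
    reachesIn_one rfl (hwalk k hak hkb) hq (by omega) (by omega) (by simp [Dir3.move])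
      (Function.update_eq_self _ _)

theorem reachesIn_walk_left {q : Q} (hq : q ≠ M.qf) {t : ℤ → Γ} {a b : ℕ} (m : ℕ)
    (hm : a + m = b) (hb : b ≤ n)
    (hwalk : ∀ i : ℕ, a < i → i ≤ b → M.δ q (t i) = (t i, q, .L)) :
    M.ReachesIn n m ⟨q, b, t⟩ ⟨q, a, t⟩ :=
  ReachesIn.chain_down (fun k => ⟨q, k, t⟩) m hm fun k hak hkb =>
    reachesIn_one rfl (hwalk (k + 1) (by omega) (by omega)) hq (by omega) (by omega)
      (by simp [Dir3.move]) (Function.update_eq_self _ _)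

theorem ReachesIn.properRun {t : ℕ} {tape₀ tape₁ : ℤ → Γ}
    (h : M.ReachesIn n t ⟨M.q0, 0, tape₀⟩ ⟨M.qf, 0, tape₁⟩) :
    M.ProperRun tape₀ t tape₁ ∧ M.SpaceBound tape₀ t (n + 1) := by
  have hlast : M.run tape₀ t = ⟨M.qf, 0, tape₁⟩ := h.1
  have hbefore : ∀ t' < t, (M.run tape₀ t').state ≠ M.qf ∧ 0 ≤ (M.run tape₀ t').head ∧
      (M.run tape₀ t').head ≤ n := h.2
  refine ⟨⟨by rw [hlast], by rw [hlast], by rw [hlast], fun t' ht' => (hbefore t' ht').1,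
    fun t' ht' => ?_⟩, fun t' ht' => ?_⟩
  · rcases ht'.lt_or_eq with ht' | rfl
    · exact (hbefore t' ht').2.1
    · rw [hlast]
  · rcases ht'.lt_or_eq with ht' | rfl
    · have := (hbefore t' ht').2.2; omega
    · rw [hlast]; simp

end GTM

structure Nat.IsCarryBit (j c : ℕ) : Prop where
  testBit_lt : ∀ i < c, j.testBit i
  testBit_eq : j.testBit c = false
  testBit_succ_lt : ∀ i < c, (j + 1).testBit i = false
  testBit_succ_eq : (j + 1).testBit c
  testBit_succ_gt : ∀ i, c < i → (j + 1).testBit i = j.testBit i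

theorem Nat.exists_isCarryBit (j : ℕ) : ∃ c, j.IsCarryBit c := by
  induction j using Nat.strong_induction_on with
  | _ j ih =>
  obtain ⟨m, rfl | rfl⟩ := Nat.even_or_odd' j
  · refine ⟨0, ⟨by simp, by simp, by simp, by simp, fun i hi => ?_⟩⟩
    obtain ⟨i, rfl⟩ := Nat.exists_eq_add_of_lt hi
    simp only [zero_add, Nat.testBit_add_one]
    congr 1
    omega
  · obtain ⟨c, hone, hzero, hone', hzero', hhigh⟩ := ih m (by omega)
    have hdiv : (2 * m + 1) / 2 = m := by omega
    have hdiv' : (2 * m + 1 + 1) / 2 = m + 1 := by omega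
    refine ⟨c + 1, ⟨fun i hi => ?_, ?_, fun i hi => ?_, ?_, fun i hi => ?_⟩⟩
    · cases i with
      | zero => simp
      | succ i => simpa only [Nat.testBit_add_one, hdiv] using hone i (by omega)
    · simpa only [Nat.testBit_add_one, hdiv] using hzero
    · cases i with
      | zero => simp only [Nat.testBit_zero, decide_eq_false_iff_not]; omega
      | succ i => simpa only [Nat.testBit_add_one, hdiv'] using hone' i (by omega)
    · simpa only [Nat.testBit_add_one, hdiv'] using hzero'
    · obtain ⟨i, rfl⟩ : ∃ i', i = i' + 1 := ⟨i - 1, by omega⟩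
      simpa only [Nat.testBit_add_one, hdiv, hdiv'] using hhigh i (by omega)

theorem Nat.IsCarryBit.lt {j c : ℕ} (hc : j.IsCarryBit c) (hj : 2 ≤ j) : c < j := by
  have hpow : 2 ^ c ≤ j + 1 := Nat.ge_two_pow_of_testBit hc.testBit_succ_eq
  have hlt : j + 1 < 2 ^ j := by
    have := Nat.lt_two_pow_self (n := j - 1)
    rw [show j = j - 1 + 1 by omega, pow_succ]
    omega
  by_contra! hcj
  have := Nat.pow_le_pow_right two_pos hcj
  omega

theorem binTape_apply (n : ℕ) (i : ℤ) :
    binTape n i = if 0 ≤ i ∧ i < binLen n then some (n.testBit i.toNat) else none := by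
  unfold binTape binLen
  rw [Nat.getD_digits _ _ le_rfl]
  simp only [Nat.testBit_eq_decide_div_mod_eq, Bool.beq_eq_decide_eq]

theorem testBit_binLen_sub_one {n : ℕ} (hn : n ≠ 0) : n.testBit (binLen n - 1) := by
  rw [binLen, Nat.length_digits 2 n one_lt_two hn, ← Nat.log2_eq_log_two, Nat.add_sub_cancel]
  exact Nat.testBit_log2 hn

theorem testBit_of_binLen_le {n i : ℕ} (hi : binLen n ≤ i) : n.testBit i = false :=
  Nat.testBit_lt_two_pow ((Nat.digits_length_le_iff one_lt_two n).1 hi)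

theorem binLen_le_self (n : ℕ) : binLen n ≤ n :=
  (Nat.digits_length_le_iff one_lt_two n).2 Nat.lt_two_pow_self

theorem one_lt_binLen {n : ℕ} (hn : 2 ≤ n) : 1 < binLen n :=
  (Nat.lt_digits_length_iff one_lt_two n).2 (by simpa using hn)

namespace UtoB

open GTM

inductive St : Type
  | start | setupOpen | setupBack | setupClose | examine | seekBeacon | carry | carryBack
  | seekHole | trim | trimBeacon | seekEnd | rewind | halt
deriving DecidableEq

instance : Fintype St :=
  ⟨{.start, .setupOpen, .setupBack, .setupClose, .examine, .seekBeacon, .carry, .carryBack,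
      .seekHole, .trim, .trimBeacon, .seekEnd, .rewind, .halt}, fun q => by cases q <;> decide⟩

abbrev Gam : Type := Option Unit × Option Bool

-- Only part of the table is used on valid inputs; the remaining entries complete it so that
-- `(written symbol, new state)` determines `(state, symbol read)`.
def δ : St → Gam → Gam × St × Dir3
  | .start, (none, none) => ((none, none), .halt, .N)
  | .start, (none, some false) => ((none, none), .setupOpen, .R)
  | .start, (none, some true) => ((none, some false), .setupOpen, .R)
  | .start, (some _, none) => ((none, some true), .setupOpen, .R)
  | .start, (some _, some false) => ((some (), none), .setupOpen, .R)
  | .start, (some _, some true) => ((some (), some false), .setupOpen, .R)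
  | .setupOpen, (none, none) => ((none, none), .trimBeacon, .L)
  | .setupOpen, (none, some false) => ((some (), some true), .setupOpen, .R)
  | .setupOpen, (none, some true) => ((none, some false), .setupBack, .L)
  | .setupOpen, (some _, none) => ((none, none), .setupBack, .L)
  | .setupOpen, (some _, some false) => ((none, some true), .setupBack, .L)
  | .setupOpen, (some _, some true) => ((some (), none), .setupBack, .L)
  | .setupBack, (none, none) => ((some (), some false), .setupBack, .L)
  | .setupBack, (none, some false) => ((some (), some true), .setupBack, .L)
  | .setupBack, (none, some true) => ((none, some false), .setupClose, .R)
  | .setupBack, (some _, none) => ((none, none), .setupClose, .R)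
  | .setupBack, (some _, some false) => ((none, some true), .setupClose, .R)
  | .setupBack, (some _, some true) => ((some (), none), .setupClose, .R)
  | .setupClose, (none, none) => ((some (), some true), .examine, .R)
  | .setupClose, (none, some false) => ((some (), some false), .setupClose, .R)
  | .setupClose, (none, some true) => ((some (), some true), .setupClose, .R)
  | .setupClose, (some _, none) => ((none, none), .examine, .R)
  | .setupClose, (some _, some false) => ((none, some false), .examine, .R)
  | .setupClose, (some _, some true) => ((none, some true), .examine, .R)
  | .examine, (none, none) => ((none, none), .trim, .L)
  | .examine, (none, some false) => ((some (), none), .examine, .R)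
  | .examine, (none, some true) => ((none, some false), .seekBeacon, .L)
  | .examine, (some _, none) => ((none, none), .seekBeacon, .L)
  | .examine, (some _, some false) => ((none, some true), .seekBeacon, .L)
  | .examine, (some _, some true) => ((some (), none), .seekBeacon, .L)
  | .seekBeacon, (none, none) => ((none, none), .carry, .R)
  | .seekBeacon, (none, some false) => ((none, some true), .seekHole, .R)
  | .seekBeacon, (none, some true) => ((none, some false), .carry, .R)
  | .seekBeacon, (some _, none) => ((none, some true), .carry, .R)
  | .seekBeacon, (some _, some false) => ((some (), some false), .seekBeacon, .L)
  | .seekBeacon, (some _, some true) => ((some (), some true), .seekBeacon, .L)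
  | .carry, (none, none) => ((some (), none), .carry, .R)
  | .carry, (none, some false) => ((some (), some true), .carry, .R)
  | .carry, (none, some true) => ((none, none), .carryBack, .L)
  | .carry, (some _, none) => ((none, some false), .carryBack, .L)
  | .carry, (some _, some false) => ((some (), some true), .carryBack, .L)
  | .carry, (some _, some true) => ((some (), some false), .carry, .R)
  | .carryBack, (none, none) => ((none, some true), .carryBack, .L)
  | .carryBack, (none, some false) => ((none, some false), .seekHole, .R)
  | .carryBack, (none, some true) => ((some (), none), .carryBack, .L)
  | .carryBack, (some _, none) => ((none, none), .seekHole, .R)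
  | .carryBack, (some _, some false) => ((some (), some false), .carryBack, .L)
  | .carryBack, (some _, some true) => ((some (), none), .seekHole, .R)
  | .seekHole, (none, none) => ((some (), some false), .examine, .R)
  | .seekHole, (none, some false) => ((none, some false), .trim, .L)
  | .seekHole, (none, some true) => ((none, some true), .trim, .L)
  | .seekHole, (some _, none) => ((some (), some false), .trim, .L)
  | .seekHole, (some _, some false) => ((some (), some false), .seekHole, .R)
  | .seekHole, (some _, some true) => ((some (), some true), .seekHole, .R)
  | .trim, (none, none) => ((some (), some true), .trim, .L)
  | .trim, (none, some false) => ((none, some false), .trimBeacon, .L)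
  | .trim, (none, some true) => ((none, some true), .trimBeacon, .L)
  | .trim, (some _, none) => ((some (), none), .trimBeacon, .L)
  | .trim, (some _, some false) => ((some (), none), .trim, .L)
  | .trim, (some _, some true) => ((some (), some true), .seekEnd, .R)
  | .trimBeacon, (none, none) => ((some (), some false), .trimBeacon, .L)
  | .trimBeacon, (none, some false) => ((some (), some true), .trimBeacon, .L)
  | .trimBeacon, (none, some true) => ((none, some true), .seekEnd, .R)
  | .trimBeacon, (some _, none) => ((none, none), .seekEnd, .R)
  | .trimBeacon, (some _, some false) => ((none, some false), .seekEnd, .R)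
  | .trimBeacon, (some _, some true) => ((some (), some false), .seekEnd, .R)
  | .seekEnd, (none, none) => ((none, none), .rewind, .L)
  | .seekEnd, (none, some false) => ((none, some false), .rewind, .L)
  | .seekEnd, (none, some true) => ((none, some true), .rewind, .L)
  | .seekEnd, (some _, none) => ((some (), none), .seekEnd, .R)
  | .seekEnd, (some _, some false) => ((none, some false), .halt, .N)
  | .seekEnd, (some _, some true) => ((none, some true), .halt, .N)
  | .rewind, (none, none) => ((some (), none), .halt, .N)
  | .rewind, (none, some false) => ((some (), some false), .halt, .N)
  | .rewind, (none, some true) => ((some (), some true), .halt, .N)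
  | .rewind, (some _, none) => ((some (), none), .rewind, .L)
  | .rewind, (some _, some false) => ((some (), some false), .rewind, .L)
  | .rewind, (some _, some true) => ((some (), some true), .rewind, .L)
  | .halt, (none, none) => ((none, none), .start, .N)
  | .halt, (none, some false) => ((none, some false), .start, .N)
  | .halt, (none, some true) => ((none, some true), .start, .N)
  | .halt, (some _, none) => ((some (), none), .start, .N)
  | .halt, (some _, some false) => ((some (), some false), .start, .N)
  | .halt, (some _, some true) => ((some (), some true), .start, .N)

def dirInto : St → Dir3
  | .start | .halt => .N
  | .setupOpen | .setupClose | .examine | .carry | .seekHole | .seekEnd => .R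
  | .setupBack | .seekBeacon | .carryBack | .trim | .trimBeacon | .rewind => .L

theorem δ_dir (q : St) (σ : Gam) : (δ q σ).2.2 = dirInto (δ q σ).2.1 := by
  revert q σ; decide

theorem δ_injective :
    Function.Injective fun p : St × Gam => ((δ p.1 p.2).1, (δ p.1 p.2).2.1) := by
  decide

def M : GTM Gam St := ⟨(none, none), .start, .halt, δ⟩

theorem M_reversible : M.Reversible :=
  M.reversible_of_injective dirInto δ_dir δ_injective

theorem M_normalForm : M.NormalForm := by
  unfold GTM.NormalForm; decide

def tape (a n m v : ℕ) : ℤ → Gam := fun i =>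
  (if a ≤ i ∧ i < n then some () else none,
    if 0 ≤ i ∧ i < m then some (v.testBit i.toNat) else none)

section Tape

variable {a n m v : ℕ} {i : ℤ}

theorem tape_mark_bit (h₁ : a ≤ i) (h₂ : i < n) (h₃ : 0 ≤ i) (h₄ : i < m) :
    tape a n m v i = (some (), some (v.testBit i.toNat)) := by
  simp only [tape, if_pos (And.intro h₁ h₂), if_pos (And.intro h₃ h₄)]

theorem tape_mark_none (h₁ : a ≤ i) (h₂ : i < n) (h₃ : m ≤ i) :
    tape a n m v i = (some (), none) := by
  simp only [tape, if_pos (And.intro h₁ h₂), if_neg (show ¬(0 ≤ i ∧ i < m) by omega)]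

theorem tape_none_bit (h₁ : i < a ∨ n ≤ i) (h₃ : 0 ≤ i) (h₄ : i < m) :
    tape a n m v i = (none, some (v.testBit i.toNat)) := by
  simp only [tape, if_neg (show ¬(a ≤ i ∧ i < n) by omega), if_pos (And.intro h₃ h₄)]

theorem tape_none_none (h₁ : i < a ∨ n ≤ i) (h₂ : i < 0 ∨ m ≤ i) :
    tape a n m v i = (none, none) := by
  simp only [tape, if_neg (show ¬(a ≤ i ∧ i < n) by omega),
    if_neg (show ¬(0 ≤ i ∧ i < m) by omega)]

theorem tape_natCast {x : ℕ} (h₁ : a ≤ x) (h₂ : x < n) (h₃ : x < m) :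
    tape a n m v x = (some (), some (v.testBit x)) := by
  rw [tape_mark_bit (by omega) (by omega) (by omega) (by omega), Int.toNat_natCast]

theorem tape_one_zero (h : 0 < m) : tape 1 n m v 0 = (none, some (v.testBit 0)) :=
  tape_none_bit (by omega) le_rfl (by omega)

theorem tape_congr {m' v' : ℕ} (hm : i < m ↔ i < m')
    (hv : 0 ≤ i → i < m → v.testBit i.toNat = v'.testBit i.toNat) :
    tape a n m v i = tape a n m' v' i := by
  simp only [tape, hm]
  by_cases h : 0 ≤ i ∧ i < m'
  · rw [if_pos h, if_pos h, hv h.1 (hm.2 h.2)]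
  · rw [if_neg h, if_neg h]

theorem update_tape_zero_zero :
    Function.update (tape 0 n 0 0) 0 (none, some true) = tape 1 n 1 1 := by
  refine Function.update_eq_iff.2 ⟨by rw [tape_one_zero one_pos]; rfl, fun i hi => ?_⟩
  simp only [tape]
  split_ifs <;> first | rfl | omega

theorem update_tape_one_zero (hm : 0 < m) (hn : 0 < n) :
    Function.update (tape 1 n m v) 0 (some (), some (v.testBit 0)) = tape 0 n m v := by
  refine Function.update_eq_iff.2 ⟨by rw [tape_mark_bit] <;> simp <;> omega, fun i hi => ?_⟩
  simp only [tape]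
  split_ifs <;> first | rfl | omega

theorem update_tape_succ (ha : a ≤ m) (hmn : m < n) :
    Function.update (tape a n (m + 1) v) m (some (), none) = tape a n m v :=
  Function.update_eq_iff.2 ⟨(tape_mark_none (by omega) (by omega) le_rfl).symm,
    fun _ hi => tape_congr (by omega) fun _ _ => rfl⟩

end Tape

theorem input_eq_tape (n : ℕ) : (fun i => (unaryTape n i, none)) = tape 0 n 0 0 := by
  funext i
  simp [tape, unaryTape]

theorem output_eq_tape (n : ℕ) :
    (fun i => (unaryTape n i, binTape n i)) = tape 0 n (binLen n) n := by
  funext i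
  simp [tape, unaryTape, binTape_apply]

def roundTape (n j x : ℕ) : ℤ → Gam := fun i =>
  if i = j then (none, none) else if i < x then tape 1 n (j + 1) (j + 1) i else tape 1 n j j i

section RoundTape

variable {n j x : ℕ} {i : ℤ}

theorem roundTape_self : roundTape n j x j = (none, none) := if_pos rfl

theorem roundTape_of_lt (hij : i ≠ j) (hix : i < x) :
    roundTape n j x i = tape 1 n (j + 1) (j + 1) i := by
  rw [roundTape, if_neg hij, if_pos hix]

theorem roundTape_of_le (hij : i ≠ j) (hix : x ≤ i) : roundTape n j x i = tape 1 n j j i := by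
  rw [roundTape, if_neg hij, if_neg (not_lt.2 hix)]

theorem update_tape_eq_roundTape :
    Function.update (tape 1 n j j) j (none, none) = roundTape n j 0 := by
  refine Function.update_eq_iff.2 ⟨roundTape_self.symm, fun i hij => ?_⟩
  rcases lt_or_ge i 0 with hi | hi
  · rw [roundTape_of_lt hij (by simpa using hi), tape_none_none (by omega) (by omega),
      tape_none_none (by omega) (by omega)]
  · rw [roundTape_of_le hij (by simpa using hi)]

theorem update_roundTape_of_ne (hxj : x ≠ j) :
    Function.update (roundTape n j x) x (tape 1 n (j + 1) (j + 1) x) = roundTape n j (x + 1) := by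
  refine Function.update_eq_iff.2
    ⟨by rw [roundTape_of_lt (by omega) (by omega)], fun i hix => ?_⟩
  by_cases hij : i = j
  · rw [hij, roundTape_self, roundTape_self]
  rcases lt_or_gt_of_ne hix with hix | hix
  · rw [roundTape_of_lt hij hix, roundTape_of_lt hij (by omega)]
  · rw [roundTape_of_le hij (by omega), roundTape_of_le hij (by omega)]

theorem roundTape_mark (h₁ : 1 ≤ i) (h₂ : i < j) (hjn : j < n) :
    ∃ b, roundTape n j x i = (some (), some b) := by
  rcases lt_or_ge i x with hix | hix
  · rw [roundTape_of_lt (by omega) hix, tape_mark_bit (by omega) (by omega) (by omega) (by omega)]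
    exact ⟨_, rfl⟩
  · rw [roundTape_of_le (by omega) hix, tape_mark_bit (by omega) (by omega) (by omega) (by omega)]
    exact ⟨_, rfl⟩

theorem update_roundTape_self {b : Bool} (hj : 1 ≤ j) (hjn : j < n) (hb : (j + 1).testBit j = b)
    (hagree : ∀ i, x ≤ i → i < j → (j + 1).testBit i = j.testBit i) :
    Function.update (roundTape n j x) j (some (), some b) = tape 1 n (j + 1) (j + 1) := by
  refine Function.update_eq_iff.2 ⟨?_, fun i hij => ?_⟩
  · rw [tape_natCast (by omega) (by omega) (by omega), hb]
  rcases lt_or_ge i x with hix | hix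
  · exact roundTape_of_lt hij hix
  rw [roundTape_of_le hij hix]
  exact tape_congr (by omega) fun hi hij' => (hagree _ (by omega) (by omega)).symm

end RoundTape

section Round

variable {n j : ℕ}

theorem reachesIn_seekBeacon (hj : 1 ≤ j) (hjn : j < n) :
    M.ReachesIn n j ⟨.examine, j, tape 1 n j j⟩ ⟨.seekBeacon, 0, roundTape n j 0⟩ := by
  have hlift : M.ReachesIn n 1 ⟨.examine, j, tape 1 n j j⟩
      ⟨.seekBeacon, (j - 1 : ℕ), roundTape n j 0⟩ :=
    reachesIn_one (tape_mark_none (by simp; omega) (by omega) le_rfl) rfl (by decide)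
      (by omega) (by omega) (by simp only [Dir3.move]; omega) update_tape_eq_roundTape
  have hwalk : M.ReachesIn n (j - 1) ⟨.seekBeacon, (j - 1 : ℕ), roundTape n j 0⟩
      ⟨.seekBeacon, (0 : ℕ), roundTape n j 0⟩ :=
    reachesIn_walk_left (by decide) (j - 1) (by omega) (by omega) fun i _ _ => by
      obtain ⟨b, hb⟩ := roundTape_mark (i := i) (j := j) (x := 0) (by omega) (by omega) hjn
      rw [hb]
      cases b <;> rfl
  exact (hlift.trans hwalk).congr_steps (by omega)

theorem reachesIn_flip {q q' : St} {x x' : ℕ} {p' : ℤ} {σ w : Gam} {d : Dir3} (hxj : x ≠ j)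
    (hread : tape 1 n j j x = σ) (hwrite : tape 1 n (j + 1) (j + 1) x = w)
    (hδ : M.δ q σ = (w, q', d)) (hq : q ≠ .halt) (hxn : x ≤ n) (hp' : x + d.move = p')
    (hx' : x + 1 = x') :
    M.ReachesIn n 1 ⟨q, x, roundTape n j x⟩ ⟨q', p', roundTape n j x'⟩ := by
  refine reachesIn_one (by rw [roundTape_of_le (by omega) le_rfl, hread]) hδ hq (by omega)
    (by omega) hp' ?_
  rw [← hx', ← hwrite]
  exact update_roundTape_of_ne hxj

theorem reachesIn_carry {c : ℕ} (hc : j.IsCarryBit (c + 1)) (hcj : c + 1 < j) (hjn : j < n) :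
    M.ReachesIn n (c + 1) ⟨.seekBeacon, 0, roundTape n j 0⟩
      ⟨.carry, (c + 1 : ℕ), roundTape n j (c + 1)⟩ := by
  have hstart : M.ReachesIn n 1 ⟨.seekBeacon, (0 : ℕ), roundTape n j 0⟩
      ⟨.carry, (1 : ℕ), roundTape n j 1⟩ :=
    reachesIn_flip (d := .R) (by omega)
      (by rw [Nat.cast_zero, tape_one_zero (by omega), hc.testBit_lt 0 (by omega)])
      (by rw [Nat.cast_zero, tape_one_zero (by omega), hc.testBit_succ_lt 0 (by omega)])
      rfl (by decide) (by omega) (by simp [Dir3.move]) rfl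
  have hsweep : M.ReachesIn n c ⟨.carry, (1 : ℕ), roundTape n j 1⟩
      ⟨.carry, (c + 1 : ℕ), roundTape n j (c + 1)⟩ :=
    ReachesIn.chain (fun x => ⟨.carry, x, roundTape n j x⟩) c (by omega) fun x _ _ =>
      reachesIn_flip (d := .R) (by omega)
        (by rw [tape_natCast (by omega) (by omega) (by omega), hc.testBit_lt _ (by omega)])
        (by rw [tape_natCast (by omega) (by omega) (by omega), hc.testBit_succ_lt _ (by omega)])
        rfl (by decide) (by omega) (by simp [Dir3.move]) rfl
  exact (hstart.trans hsweep).congr_steps (by omega)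

theorem reachesIn_increment {c : ℕ} (hc : j.IsCarryBit c) (hcj : c < j) (hjn : j < n) :
    M.ReachesIn n (2 * c + 1) ⟨.seekBeacon, 0, roundTape n j 0⟩
      ⟨.seekHole, 1, roundTape n j (c + 1)⟩ := by
  rcases c with _ | c
  · exact reachesIn_flip (x := 0) (d := .R) (by omega)
      (by rw [Nat.cast_zero, tape_one_zero (by omega), hc.testBit_eq])
      (by rw [Nat.cast_zero, tape_one_zero (by omega), hc.testBit_succ_eq]) rfl (by decide)
      (by omega) (by simp [Dir3.move]) rfl
  have hflip : M.ReachesIn n 1 ⟨.carry, (c + 1 : ℕ), roundTape n j (c + 1)⟩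
      ⟨.carryBack, c, roundTape n j (c + 2)⟩ :=
    reachesIn_flip (d := .L) (by omega)
      (by rw [tape_natCast (by omega) (by omega) (by omega), hc.testBit_eq])
      (by rw [tape_natCast (by omega) (by omega) (by omega), hc.testBit_succ_eq])
      rfl (by decide) (by omega) (by simp [Dir3.move]) rfl
  have hback : M.ReachesIn n c ⟨.carryBack, c, roundTape n j (c + 2)⟩
      ⟨.carryBack, (0 : ℕ), roundTape n j (c + 2)⟩ :=
    reachesIn_walk_left (by decide) c (by omega) (by omega) fun i _ _ => by
      rw [roundTape_of_lt (by omega) (by omega), tape_natCast (by omega) (by omega) (by omega),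
        hc.testBit_succ_lt _ (by omega)]
      rfl
  have hread : roundTape n j (c + 2) 0 = (none, some false) := by
    rw [roundTape_of_lt (by omega) (by omega), tape_one_zero (by omega),
      hc.testBit_succ_lt 0 (by omega)]
  have hbounce : M.ReachesIn n 1 ⟨.carryBack, 0, roundTape n j (c + 2)⟩
      ⟨.seekHole, 1, roundTape n j (c + 2)⟩ :=
    reachesIn_one hread rfl (by decide) le_rfl (by omega) (by simp [Dir3.move])
      (Function.update_eq_self_iff.2 hread.symm)
  exact ((((reachesIn_carry hc (by omega) hjn).trans hflip).trans hback).trans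
    hbounce).congr_steps (by omega)

theorem reachesIn_restore {c : ℕ} (hc : j.IsCarryBit c) (hcj : c < j) (hjn : j < n) :
    M.ReachesIn n j ⟨.seekHole, 1, roundTape n j (c + 1)⟩
      ⟨.examine, (j + 1 : ℕ), tape 1 n (j + 1) (j + 1)⟩ := by
  have hwalk : M.ReachesIn n (j - 1) ⟨.seekHole, (1 : ℕ), roundTape n j (c + 1)⟩
      ⟨.seekHole, j, roundTape n j (c + 1)⟩ :=
    reachesIn_walk_right (by decide) (j - 1) (by omega) (by omega) fun i _ _ => by
      obtain ⟨b, hb⟩ := roundTape_mark (i := i) (j := j) (x := c + 1) (by omega) (by omega) hjn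
      rw [hb]
      cases b <;> rfl
  have hbit : (j + 1).testBit j = false := by
    rw [hc.testBit_succ_gt j hcj, Nat.testBit_lt_two_pow Nat.lt_two_pow_self]
  have hclose : M.ReachesIn n 1 ⟨.seekHole, j, roundTape n j (c + 1)⟩
      ⟨.examine, (j + 1 : ℕ), tape 1 n (j + 1) (j + 1)⟩ :=
    reachesIn_one roundTape_self rfl (by decide) (by omega) (by omega) (by simp [Dir3.move])
      (update_roundTape_self (by omega) hjn hbit fun i hi _ => hc.testBit_succ_gt i (by omega))
  exact (hwalk.trans hclose).congr_steps (by omega)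

theorem reachesIn_round (hj : 2 ≤ j) (hjn : j < n) :
    ∃ s ≤ 4 * j, M.ReachesIn n s ⟨.examine, j, tape 1 n j j⟩
      ⟨.examine, (j + 1 : ℕ), tape 1 n (j + 1) (j + 1)⟩ := by
  obtain ⟨c, hc⟩ := j.exists_isCarryBit
  have hcj := hc.lt hj
  exact ⟨_, by omega, ((reachesIn_seekBeacon (by omega) hjn).trans
    (reachesIn_increment hc hcj hjn)).trans (reachesIn_restore hc hcj hjn)⟩

end Round

section Halt

variable {n : ℕ}

theorem reachesIn_setup (hn : 2 ≤ n) :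
    M.ReachesIn n 4 ⟨.start, 0, tape 0 n 0 0⟩ ⟨.examine, (2 : ℕ), tape 1 n 2 2⟩ := by
  have hopen : M.ReachesIn n 1 ⟨.start, 0, tape 0 n 0 0⟩
      ⟨.setupOpen, (1 : ℕ), tape 1 n 1 1⟩ :=
    reachesIn_one (tape_mark_none (by simp) (by omega) le_rfl) rfl (by decide) le_rfl (by omega)
      (by simp [Dir3.move]) update_tape_zero_zero
  have hlift : M.ReachesIn n 1 ⟨.setupOpen, (1 : ℕ), tape 1 n 1 1⟩
      ⟨.setupBack, (0 : ℕ), roundTape n 1 0⟩ :=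
    reachesIn_one (tape_mark_none (by simp) (by omega) (by simp)) rfl (by decide) (by omega)
      (by omega) (by simp [Dir3.move]) update_tape_eq_roundTape
  have hback : M.ReachesIn n 1 ⟨.setupBack, (0 : ℕ), roundTape n 1 0⟩
      ⟨.setupClose, (1 : ℕ), roundTape n 1 1⟩ :=
    reachesIn_flip (d := .R) (by omega) (by rw [Nat.cast_zero, tape_one_zero one_pos])
      (by rw [Nat.cast_zero, tape_one_zero (by omega)]) rfl (by decide) (by omega)
      (by simp [Dir3.move]) rfl
  have hclose : M.ReachesIn n 1 ⟨.setupClose, (1 : ℕ), roundTape n 1 1⟩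
      ⟨.examine, (2 : ℕ), tape 1 n 2 2⟩ :=
    reachesIn_one roundTape_self rfl (by decide) (by omega) (by omega) (by simp [Dir3.move])
      (update_roundTape_self le_rfl (by omega) rfl fun i hi hi' => by omega)
  exact ((hopen.trans hlift).trans hback).trans hclose

theorem reachesIn_count (hn : 2 ≤ n) {j : ℕ} (hj : 2 ≤ j) (hjn : j ≤ n) :
    ∃ s ≤ 2 * j ^ 2,
      M.ReachesIn n s ⟨.start, 0, tape 0 n 0 0⟩ ⟨.examine, j, tape 1 n j j⟩ := by
  induction j, hj using Nat.le_induction with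
  | base => exact ⟨4, by norm_num, reachesIn_setup hn⟩
  | succ j hj ih =>
    obtain ⟨s, hs, h⟩ := ih (by omega)
    obtain ⟨s', hs', h'⟩ := reachesIn_round (n := n) hj (by omega)
    exact ⟨s + s', by nlinarith, h.trans h'⟩

theorem reachesIn_trim (hn : 2 ≤ n) :
    M.ReachesIn n (n - binLen n + 2) ⟨.examine, n, tape 1 n n n⟩
      ⟨.seekEnd, binLen n, tape 1 n (binLen n) n⟩ := by
  have hL := one_lt_binLen hn
  have hLn := binLen_le_self n
  have hturn : M.ReachesIn n 1 ⟨.examine, n, tape 1 n n n⟩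
      ⟨.trim, (n - 1 : ℕ), tape 1 n n n⟩ :=
    reachesIn_one (tape_none_none (by omega) (by omega)) rfl (by decide) (by omega) le_rfl
      (by simp only [Dir3.move]; omega)
      (Function.update_eq_self_iff.2 (tape_none_none (by omega) (by omega)).symm)
  have hsweep : M.ReachesIn n (n - binLen n) ⟨.trim, (n - 1 : ℕ), tape 1 n n n⟩
      ⟨.trim, (binLen n - 1 : ℕ), tape 1 n (binLen n) n⟩ :=
    ReachesIn.chain_down (fun m => (⟨.trim, (m - 1 : ℕ), tape 1 n m n⟩ : GCfg Gam St)) _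
      (by omega) fun m _ _ =>
      reachesIn_one (by rw [tape_natCast (by omega) (by omega) (by omega),
          testBit_of_binLen_le (by omega)]) rfl (by decide) (by omega) (by omega)
        (by simp only [Dir3.move]; omega) (update_tape_succ (by omega) (by omega))
  have hmsb : tape 1 n (binLen n) n (binLen n - 1 : ℕ) = (some (), some true) := by
    rw [tape_natCast (by omega) (by omega) (by omega), testBit_binLen_sub_one (by omega)]
  have hstop : M.ReachesIn n 1 ⟨.trim, (binLen n - 1 : ℕ), tape 1 n (binLen n) n⟩
      ⟨.seekEnd, binLen n, tape 1 n (binLen n) n⟩ :=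
    reachesIn_one hmsb rfl (by decide) (by omega) (by omega) (by simp only [Dir3.move]; omega)
      (Function.update_eq_self_iff.2 hmsb.symm)
  exact ((hturn.trans hsweep).trans hstop).congr_steps (by omega)

theorem reachesIn_seekEnd {m v : ℕ} (hm : 1 ≤ m) (hmn : m ≤ n) :
    M.ReachesIn n (n - m + 1) ⟨.seekEnd, m, tape 1 n m v⟩
      ⟨.rewind, (n - 1 : ℕ), tape 1 n m v⟩ := by
  have hwalk : M.ReachesIn n (n - m) ⟨.seekEnd, m, tape 1 n m v⟩
      ⟨.seekEnd, n, tape 1 n m v⟩ :=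
    reachesIn_walk_right (by decide) _ (by omega) le_rfl fun i _ _ => by
      rw [tape_mark_none (by omega) (by omega) (by omega)]
      rfl
  have hturn : M.ReachesIn n 1 ⟨.seekEnd, n, tape 1 n m v⟩
      ⟨.rewind, (n - 1 : ℕ), tape 1 n m v⟩ :=
    reachesIn_one (tape_none_none (by omega) (by omega)) rfl (by decide) (by omega) le_rfl
      (by simp only [Dir3.move]; omega)
      (Function.update_eq_self_iff.2 (tape_none_none (by omega) (by omega)).symm)
  exact hwalk.trans hturn

theorem reachesIn_rewind {m v : ℕ} (hm : 1 ≤ m) (hmn : m ≤ n) :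
    M.ReachesIn n n ⟨.rewind, (n - 1 : ℕ), tape 1 n m v⟩ ⟨.halt, 0, tape 0 n m v⟩ := by
  have hwalk : M.ReachesIn n (n - 1) ⟨.rewind, (n - 1 : ℕ), tape 1 n m v⟩
      ⟨.rewind, (0 : ℕ), tape 1 n m v⟩ :=
    reachesIn_walk_left (by decide) _ (by omega) (by omega) fun i _ _ => by
      rcases lt_or_ge i m with him | him
      · rw [tape_natCast (by omega) (by omega) him]
        cases v.testBit i <;> rfl
      · rw [tape_mark_none (by omega) (by omega) (by omega)]
        rfl
  have hhalt : M.ReachesIn n 1 ⟨.rewind, (0 : ℕ), tape 1 n m v⟩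
      ⟨.halt, 0, tape 0 n m v⟩ :=
    reachesIn_one (by rw [Nat.cast_zero, tape_one_zero hm]) (by cases v.testBit 0 <;> rfl)
      (by decide) le_rfl (by omega) rfl (update_tape_one_zero hm (by omega))
  exact (hwalk.trans hhalt).congr_steps (by omega)

theorem reachesIn_halt_zero :
    M.ReachesIn 0 1 ⟨.start, 0, tape 0 0 0 0⟩ ⟨.halt, 0, tape 0 0 (binLen 0) 0⟩ :=
  reachesIn_one (tape_none_none (by omega) (by omega)) rfl (by decide) le_rfl le_rfl rfl
    (Function.update_eq_self_iff.2 (tape_none_none (by omega) (by omega)).symm)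

theorem reachesIn_halt_one :
    M.ReachesIn 1 5 ⟨.start, 0, tape 0 1 0 0⟩ ⟨.halt, 0, tape 0 1 (binLen 1) 1⟩ := by
  have hread : tape 1 1 1 1 (0 : ℕ) = (none, some true) := by
    rw [Nat.cast_zero, tape_one_zero one_pos]
    rfl
  have hopen : M.ReachesIn 1 1 ⟨.start, 0, tape 0 1 0 0⟩
      ⟨.setupOpen, (1 : ℕ), tape 1 1 1 1⟩ :=
    reachesIn_one (tape_mark_none (by simp) (by simp) le_rfl) rfl (by decide) le_rfl (by omega)
      (by simp [Dir3.move]) update_tape_zero_zero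
  have hback : M.ReachesIn 1 1 ⟨.setupOpen, (1 : ℕ), tape 1 1 1 1⟩
      ⟨.trimBeacon, (0 : ℕ), tape 1 1 1 1⟩ :=
    reachesIn_one (tape_none_none (by omega) (by omega)) rfl (by decide) (by omega) (by omega)
      (by simp [Dir3.move])
      (Function.update_eq_self_iff.2 (tape_none_none (by omega) (by omega)).symm)
  have hbeacon : M.ReachesIn 1 1 ⟨.trimBeacon, (0 : ℕ), tape 1 1 1 1⟩
      ⟨.seekEnd, (1 : ℕ), tape 1 1 1 1⟩ :=
    reachesIn_one hread rfl (by decide) (by omega) (by omega) (by simp [Dir3.move])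
      (Function.update_eq_self_iff.2 hread.symm)
  exact (((hopen.trans hback).trans hbeacon).trans
    ((reachesIn_seekEnd le_rfl le_rfl).trans (reachesIn_rewind le_rfl le_rfl)))

end Halt

theorem exists_reachesIn_halt (n : ℕ) :
    ∃ t ≤ 4 * (n + 1) ^ 2,
      M.ReachesIn n t ⟨.start, 0, tape 0 n 0 0⟩ ⟨.halt, 0, tape 0 n (binLen n) n⟩ := by
  rcases lt_or_ge n 2 with hn | hn
  · interval_cases n
    · exact ⟨1, by norm_num, reachesIn_halt_zero⟩
    · exact ⟨5, by norm_num, reachesIn_halt_one⟩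
  obtain ⟨s, hs, hcount⟩ := reachesIn_count hn hn le_rfl
  have hL₁ : 1 ≤ binLen n := (one_lt_binLen hn).le
  have hLn : binLen n ≤ n := binLen_le_self n
  exact ⟨_, by have := Nat.sub_le n (binLen n); nlinarith,
    ((hcount.trans (reachesIn_trim hn)).trans (reachesIn_seekEnd hL₁ hLn)).trans
      (reachesIn_rewind hL₁ hLn)⟩

end UtoB

/-- **Unary to binary converter** (Lemma `unary_to_binary`).  There is a two-track,
normal form, reversible TM `UtoB` with alphabet `{#,1} × {#,0,1}` which, on input
`1ⁿ;#` (the number `n` in unary on the first track, second track blank), behaves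
properly and halts with output `1ⁿ;n` (first track unchanged, `n` in little-endian
binary on the second track); it runs for `O(n² log n)` steps and uses `n + 1` cells. -/
theorem unary_to_binary_machine :
    ∃ (Q : Type) (_ : Fintype Q)
      (UtoB : GTM ((Option Unit) × (Option Bool)) Q) (C : ℕ),
      UtoB.blank = (none, none) ∧ UtoB.Reversible ∧ UtoB.NormalForm ∧
      ∀ n : ℕ, ∃ t : ℕ,
        t ≤ C * (n + 1) ^ 2 * (Nat.log 2 n + 2) ∧
        UtoB.ProperRun (fun i => (unaryTape n i, none)) t
          (fun i => (unaryTape n i, binTape n i)) ∧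
        UtoB.SpaceBound (fun i => (unaryTape n i, none)) t (n + 1) := by
  refine ⟨UtoB.St, inferInstance, UtoB.M, 2, rfl, UtoB.M_reversible, UtoB.M_normalForm,
    fun n => ?_⟩
  obtain ⟨t, ht, hrun⟩ := UtoB.exists_reachesIn_halt n
  rw [UtoB.input_eq_tape, UtoB.output_eq_tape]
  refine ⟨t, ht.trans ?_, hrun.properRun⟩
  calc 4 * (n + 1) ^ 2 = 2 * (n + 1) ^ 2 * 2 := by ring
    _ ≤ 2 * (n + 1) ^ 2 * (Nat.log 2 n + 2) := Nat.mul_le_mul_left _ (by omega)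

end
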